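/- Let K(k) ∈ ℝ^{m×n} be a gain sequence and suppose there exist finite constants η ≥ 1, ρ > η and symmetric matrices P(k) with ηI_n ⪯ P(k) ⪯ ρI_n for k = 0,…,T, such that (A(k)+B(k)K(k)) P(k) (A(k)+B(k)K(k))ᵀ − P(k+1) + I_n ⪯ 0 for k = 0,…,T−1. Let b be such that ‖B(j)‖ ≤ b for j = 0,…,T−1. Then every trajectory of the noisy closed-loop system x(k+1) = (A(k)+B(k)K(k))x(k) + B(k)K(k)v(k) + d(k) satisfies, for k = 0,…,T: ‖x(k)‖ ≤ √(ρ/η)·(1 − 1/ρ)^{k/2}·‖x(0)‖ + b·(Σ_{j=0}^{k−1} √(ρ/η)·(1 − 1/ρ)^{(k−1−j)/2}·‖K(j)‖)·|v|_{k−1} + (Σ_{j=0}^{k−1} √(ρ/η)·(1 − 1/ρ)^{(k−1−j)/2})·|d|_{k−1}, where |v|_{k−1} = sup{‖v(j)‖ : 0 ≤ j ≤ k−1} and |d|_{k−1} = sup{‖d(j)‖ : 0 ≤ j ≤ k−1}. -/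

import Mathlib

open Matrix

/-- Action of a real matrix on a Euclidean-space vector. -/
noncomputable def matVec {n m : ℕ} (M : Matrix (Fin n) (Fin m) ℝ)
    (v : EuclideanSpace ℝ (Fin m)) : EuclideanSpace ℝ (Fin n) :=
  (WithLp.equiv 2 (Fin n → ℝ)).symm (M.mulVec (fun i => v i))

/-- Induced 2-norm (operator norm) of a real matrix. -/
noncomputable def opNorm2 {n m : ℕ} (M : Matrix (Fin n) (Fin m) ℝ) : ℝ :=
  ‖LinearMap.toContinuousLinearMap (Matrix.toEuclideanLin M)‖

namespace NCLAux

variable {n m p : ℕ}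

noncomputable def clm (M : Matrix (Fin n) (Fin m) ℝ) :
    EuclideanSpace ℝ (Fin m) →L[ℝ] EuclideanSpace ℝ (Fin n) :=
  LinearMap.toContinuousLinearMap (Matrix.toEuclideanLin M)

lemma matVec_eq (M : Matrix (Fin n) (Fin m) ℝ) (v : EuclideanSpace ℝ (Fin m)) :
    matVec M v = clm M v := rfl

lemma opNorm2_eq (M : Matrix (Fin n) (Fin m) ℝ) : opNorm2 M = ‖clm M‖ := rfl

lemma norm_matVec_le (M : Matrix (Fin n) (Fin m) ℝ) (v : EuclideanSpace ℝ (Fin m)) :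
    ‖matVec M v‖ ≤ opNorm2 M * ‖v‖ := (clm M).le_opNorm v

lemma opNorm2_nonneg (M : Matrix (Fin n) (Fin m) ℝ) : 0 ≤ opNorm2 M := norm_nonneg _

lemma matVec_one (v : EuclideanSpace ℝ (Fin n)) : matVec 1 v = v := by
  unfold matVec
  ext i
  simp [Matrix.one_mulVec]

lemma matVec_mul (M : Matrix (Fin n) (Fin m) ℝ) (N : Matrix (Fin m) (Fin p) ℝ)
    (v : EuclideanSpace ℝ (Fin p)) : matVec (M * N) v = matVec M (matVec N v) := by
  unfold matVec
  congr 1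
  rw [← Matrix.mulVec_mulVec]
  rfl

lemma matVec_add (M : Matrix (Fin n) (Fin m) ℝ) (v w : EuclideanSpace ℝ (Fin m)) :
    matVec M (v + w) = matVec M v + matVec M w := by
  rw [matVec_eq, matVec_eq, matVec_eq, map_add]

lemma matVec_sum {ι : Type*} (s : Finset ι) (M : Matrix (Fin n) (Fin m) ℝ)
    (f : ι → EuclideanSpace ℝ (Fin m)) :
    matVec M (∑ i ∈ s, f i) = ∑ i ∈ s, matVec M (f i) := by
  simp only [matVec_eq]
  exact map_sum (clm M) f s

lemma clm_mul (M : Matrix (Fin n) (Fin m) ℝ) (N : Matrix (Fin m) (Fin p) ℝ) :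
    clm (M * N) = (clm M).comp (clm N) := by
  refine ContinuousLinearMap.ext fun v => ?_
  exact matVec_mul M N v

lemma opNorm2_mul_le (M : Matrix (Fin n) (Fin m) ℝ) (N : Matrix (Fin m) (Fin p) ℝ) :
    opNorm2 (M * N) ≤ opNorm2 M * opNorm2 N := by
  rw [opNorm2_eq, opNorm2_eq, opNorm2_eq, clm_mul]
  exact ContinuousLinearMap.opNorm_comp_le _ _

lemma opNorm2_transpose (M : Matrix (Fin n) (Fin m) ℝ) : opNorm2 Mᵀ = opNorm2 M := by
  have h : (Mᵀ : Matrix (Fin m) (Fin n) ℝ) = Mᴴ :=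
    (Matrix.conjTranspose_eq_transpose_of_trivial M).symm
  rw [opNorm2_eq, opNorm2_eq, clm, clm, h, Matrix.toEuclideanLin_conjTranspose_eq_adjoint,
    LinearMap.adjoint_toContinuousLinearMap]
  exact LinearIsometryEquiv.norm_map ContinuousLinearMap.adjoint _

lemma psd_smul {c : ℝ} (hc : 0 ≤ c) {M : Matrix (Fin n) (Fin n) ℝ}
    (h : M.PosSemidef) : (c • M).PosSemidef := by
  refine .of_dotProduct_mulVec_nonneg ?_ fun x => ?_
  · unfold Matrix.IsHermitian
    rw [Matrix.conjTranspose_smul, h.1.eq]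
    simp
  · have h2 := h.dotProduct_mulVec_nonneg x
    rw [Matrix.smul_mulVec, dotProduct_smul]
    exact smul_nonneg hc h2

lemma psd_conj {M : Matrix (Fin n) (Fin n) ℝ} (h : M.PosSemidef)
    (G : Matrix (Fin m) (Fin n) ℝ) : (G * M * Gᵀ).PosSemidef := by
  have := h.mul_mul_conjTranspose_same G
  rwa [Matrix.conjTranspose_eq_transpose_of_trivial] at this

lemma psd_trans {X Y Z : Matrix (Fin n) (Fin n) ℝ}
    (h1 : (X - Y).PosSemidef) (h2 : (Y - Z).PosSemidef) : (X - Z).PosSemidef := by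
  have := h1.add h2
  rwa [sub_add_sub_cancel] at this

lemma psd_quad {M : Matrix (Fin n) (Fin n) ℝ} (h : M.PosSemidef) (x : Fin n → ℝ) :
    0 ≤ x ⬝ᵥ M.mulVec x := by simpa using h.dotProduct_mulVec_nonneg x

lemma norm_sq_eq_dot (y : EuclideanSpace ℝ (Fin n)) :
    ‖y‖ ^ 2 = (fun i => y i) ⬝ᵥ (fun i => y i) := by
  rw [EuclideanSpace.norm_eq, Real.sq_sqrt (by positivity)]
  simp [dotProduct, Real.norm_eq_abs, sq]

lemma opNorm2_le_sqrt {c : ℝ} (hc : 0 ≤ c) (M : Matrix (Fin m) (Fin n) ℝ)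
    (h : (c • (1 : Matrix (Fin n) (Fin n) ℝ) - Mᵀ * M).PosSemidef) :
    opNorm2 M ≤ Real.sqrt c := by
  rw [opNorm2_eq]
  refine ContinuousLinearMap.opNorm_le_bound _ (Real.sqrt_nonneg c) fun x => ?_
  set xf : Fin n → ℝ := fun i => x i with hxf
  have hq := psd_quad h xf
  have hexp : xf ⬝ᵥ ((c • (1 : Matrix (Fin n) (Fin n) ℝ) - Mᵀ * M) *ᵥ xf)
      = c * (xf ⬝ᵥ xf) - xf ⬝ᵥ ((Mᵀ * M) *ᵥ xf) := by
    rw [Matrix.sub_mulVec, dotProduct_sub, Matrix.smul_mulVec,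
      Matrix.one_mulVec, dotProduct_smul, smul_eq_mul]
  have hdot : xf ⬝ᵥ ((Mᵀ * M) *ᵥ xf) = (M *ᵥ xf) ⬝ᵥ (M *ᵥ xf) := by
    rw [← Matrix.mulVec_mulVec, Matrix.dotProduct_mulVec, Matrix.vecMul_transpose]
  have hMx : ‖clm M x‖ ^ 2 = (M *ᵥ xf) ⬝ᵥ (M *ᵥ xf) := by
    rw [norm_sq_eq_dot]; rfl
  have hxn : ‖x‖ ^ 2 = xf ⬝ᵥ xf := norm_sq_eq_dot x
  have key : ‖clm M x‖ ^ 2 ≤ c * ‖x‖ ^ 2 := by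
    rw [hMx, hxn]
    nlinarith [hq, hexp, hdot]
  have h1 : ‖clm M x‖ = Real.sqrt (‖clm M x‖ ^ 2) := by
    rw [Real.sqrt_sq (norm_nonneg _)]
  rw [h1]
  calc Real.sqrt (‖clm M x‖ ^ 2) ≤ Real.sqrt (c * ‖x‖ ^ 2) := Real.sqrt_le_sqrt key
    _ = Real.sqrt c * ‖x‖ := by
        rw [Real.sqrt_mul hc, Real.sqrt_sq (norm_nonneg _)]

/-- Transition matrix from time `j` to time `k` (product of `Ac` matrices). -/
noncomputable def tm (Ac : ℕ → Matrix (Fin n) (Fin n) ℝ) (j : ℕ) : ℕ → Matrix (Fin n) (Fin n) ℝ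
  | 0 => 1
  | k + 1 => if j ≤ k then Ac k * tm Ac j k else 1

lemma tm_self (Ac : ℕ → Matrix (Fin n) (Fin n) ℝ) (j : ℕ) : tm Ac j j = 1 := by
  cases j with
  | zero => rfl
  | succ k => simp [tm]

lemma tm_succ (Ac : ℕ → Matrix (Fin n) (Fin n) ℝ) {j k : ℕ} (h : j ≤ k) :
    tm Ac j (k + 1) = Ac k * tm Ac j k := by
  simp [tm, h]

end NCLAux

open NCLAux in
/-- Bound on the trajectories of the noisy closed-loop system
(Lemma 2 of the paper). The sup `|v|_{k-1}` is formalised as `⨆ j : Fin k, ‖v j‖`. -/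
theorem noisy_closed_loop_trajectory_bound
    {n m T : ℕ}
    (A : ℕ → Matrix (Fin n) (Fin n) ℝ) (B : ℕ → Matrix (Fin n) (Fin m) ℝ)
    (K : ℕ → Matrix (Fin m) (Fin n) ℝ)
    (η ρ : ℝ) (hη : 1 ≤ η) (hρ : η < ρ)
    (P : ℕ → Matrix (Fin n) (Fin n) ℝ)
    (hPsymm : ∀ k ≤ T, (P k).IsSymm)
    (hPlow : ∀ k ≤ T, (P k - η • (1 : Matrix (Fin n) (Fin n) ℝ)).PosSemidef)
    (hPhigh : ∀ k ≤ T, (ρ • (1 : Matrix (Fin n) (Fin n) ℝ) - P k).PosSemidef)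
    (hLyap : ∀ k < T,
      (P (k + 1) - 1 -
        (A k + B k * K k) * P k * (A k + B k * K k)ᵀ).PosSemidef)
    (b : ℝ) (hb : ∀ j < T, opNorm2 (B j) ≤ b) :
    ∀ (x v d : ℕ → EuclideanSpace ℝ (Fin n)),
      (∀ k < T, x (k + 1) =
        matVec (A k + B k * K k) (x k) + matVec (B k * K k) (v k) + d k) →
      ∀ k ≤ T,
        ‖x k‖ ≤ Real.sqrt (ρ / η) * Real.sqrt ((1 - 1 / ρ) ^ k) * ‖x 0‖
          + b * (∑ j ∈ Finset.range k,
              Real.sqrt (ρ / η) * Real.sqrt ((1 - 1 / ρ) ^ (k - 1 - j)) *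
                opNorm2 (K j)) * (⨆ j : Fin k, ‖v (j : ℕ)‖)
          + (∑ j ∈ Finset.range k,
              Real.sqrt (ρ / η) * Real.sqrt ((1 - 1 / ρ) ^ (k - 1 - j))) *
              (⨆ j : Fin k, ‖d (j : ℕ)‖) := by
  intro x v d hx
  set Ac : ℕ → Matrix (Fin n) (Fin n) ℝ := fun k => A k + B k * K k with hAcdef
  have hη0 : (0 : ℝ) < η := lt_of_lt_of_le one_pos hη
  have hρ1 : (1 : ℝ) < ρ := lt_of_le_of_lt hη hρ
  have hρ0 : (0 : ℝ) < ρ := lt_trans one_pos hρ1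
  set c : ℝ := 1 - 1 / ρ with hcdef
  have hc0 : 0 ≤ c := by
    rw [hcdef, sub_nonneg]
    exact le_of_lt ((div_lt_one hρ0).mpr hρ1)
  -- PSD invariant for the transition matrix
  have key : ∀ j k, j ≤ k → k ≤ T →
      ((c ^ (k - j)) • P k - tm Ac j k * P j * (tm Ac j k)ᵀ).PosSemidef := by
    intro j k hjk
    induction k, hjk using Nat.le_induction with
    | base =>
      intro _
      simpa [tm_self, Nat.sub_self, Matrix.transpose_one] using
        (Matrix.PosSemidef.zero (n := Fin n) (R := ℝ))
    | succ k hjk ih =>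
      intro hkT
      have hkT' : k ≤ T := Nat.le_of_succ_le hkT
      have hkltT : k < T := Nat.lt_of_succ_le hkT
      have IH := ih hkT'
      have h1 : (Ac k * ((c ^ (k - j)) • P k - tm Ac j k * P j * (tm Ac j k)ᵀ) *
          (Ac k)ᵀ).PosSemidef := psd_conj IH (Ac k)
      have h1' : ((c ^ (k - j)) • (Ac k * P k * (Ac k)ᵀ) -
          tm Ac j (k + 1) * P j * (tm Ac j (k + 1))ᵀ).PosSemidef := by
        have e : Ac k * ((c ^ (k - j)) • P k - tm Ac j k * P j * (tm Ac j k)ᵀ) * (Ac k)ᵀ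
            = (c ^ (k - j)) • (Ac k * P k * (Ac k)ᵀ) -
              tm Ac j (k + 1) * P j * (tm Ac j (k + 1))ᵀ := by
          rw [tm_succ Ac hjk]
          simp only [Matrix.mul_sub, Matrix.sub_mul, mul_smul_comm, smul_mul_assoc,
            Matrix.transpose_mul, mul_assoc]
        rwa [e] at h1
      have h2 := hLyap k hkltT
      have h3 : (c • P (k + 1) - (P (k + 1) - 1)).PosSemidef := by
        have hp := psd_smul (le_of_lt (by positivity : (0:ℝ) < 1 / ρ)) (hPhigh (k + 1) hkT)
        have e : (1 / ρ) • (ρ • (1 : Matrix (Fin n) (Fin n) ℝ) - P (k + 1))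
            = c • P (k + 1) - (P (k + 1) - 1) := by
          rw [hcdef]
          rw [smul_sub, smul_smul, sub_smul, one_smul]
          rw [one_div, inv_mul_cancel₀ (ne_of_gt hρ0), one_smul]
          abel
        rwa [e] at hp
      have h4 : (c • P (k + 1) - Ac k * P k * (Ac k)ᵀ).PosSemidef := by
        refine psd_trans h3 ?_
        exact h2
      have h5 : ((c ^ (k + 1 - j)) • P (k + 1) -
          (c ^ (k - j)) • (Ac k * P k * (Ac k)ᵀ)).PosSemidef := by
        have hp := psd_smul (pow_nonneg hc0 (k - j)) h4
        have e : (c ^ (k - j)) • (c • P (k + 1) - Ac k * P k * (Ac k)ᵀ)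
            = (c ^ (k + 1 - j)) • P (k + 1) - (c ^ (k - j)) • (Ac k * P k * (Ac k)ᵀ) := by
          rw [smul_sub, smul_smul, ← pow_succ, Nat.succ_sub hjk]
        rwa [e] at hp
      exact psd_trans h5 h1'
  -- operator norm bound for the transition matrix
  have hnorm : ∀ j k, j ≤ k → k ≤ T →
      opNorm2 (tm Ac j k) ≤ Real.sqrt (ρ / η) * Real.sqrt (c ^ (k - j)) := by
    intro j k hjk hkT
    set G := tm Ac j k with hG
    have hkey := key j k hjk hkT
    have h1 : (G * (P j - η • (1 : Matrix (Fin n) (Fin n) ℝ)) * Gᵀ).PosSemidef :=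
      psd_conj (hPlow j (le_trans hjk hkT)) G
    have h1' : (G * P j * Gᵀ - η • (G * Gᵀ)).PosSemidef := by
      have e : G * (P j - η • (1 : Matrix (Fin n) (Fin n) ℝ)) * Gᵀ
          = G * P j * Gᵀ - η • (G * Gᵀ) := by
        simp only [Matrix.mul_sub, Matrix.sub_mul, mul_smul_comm, smul_mul_assoc, mul_one]
      rwa [e] at h1
    have h2 : ((c ^ (k - j)) • (ρ • (1 : Matrix (Fin n) (Fin n) ℝ) - P k)).PosSemidef :=
      psd_smul (pow_nonneg hc0 _) (hPhigh k hkT)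
    have hsum : ((c ^ (k - j) * ρ) • (1 : Matrix (Fin n) (Fin n) ℝ)
        - η • (G * Gᵀ)).PosSemidef := by
      have hadd := (h2.add hkey).add h1'
      have e : (c ^ (k - j)) • (ρ • (1 : Matrix (Fin n) (Fin n) ℝ) - P k)
          + ((c ^ (k - j)) • P k - G * P j * Gᵀ)
          + (G * P j * Gᵀ - η • (G * Gᵀ))
          = (c ^ (k - j) * ρ) • (1 : Matrix (Fin n) (Fin n) ℝ) - η • (G * Gᵀ) := by
        rw [smul_sub, smul_smul]
        abel
      rwa [e] at hadd
    have hdiv : ((c ^ (k - j) * ρ / η) • (1 : Matrix (Fin n) (Fin n) ℝ)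
        - Gᵀᵀ * Gᵀ).PosSemidef := by
      have hp := psd_smul (le_of_lt (by positivity : (0:ℝ) < 1 / η)) hsum
      have e : (1 / η) • ((c ^ (k - j) * ρ) • (1 : Matrix (Fin n) (Fin n) ℝ) - η • (G * Gᵀ))
          = (c ^ (k - j) * ρ / η) • (1 : Matrix (Fin n) (Fin n) ℝ) - Gᵀᵀ * Gᵀ := by
        rw [Matrix.transpose_transpose, smul_sub, smul_smul, smul_smul,
          one_div, inv_mul_cancel₀ (ne_of_gt hη0), one_smul]
        have h9 : η⁻¹ * (c ^ (k - j) * ρ) = c ^ (k - j) * ρ / η := by field_simp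
        rw [h9]
      rwa [e] at hp
    have hb1 : opNorm2 Gᵀ ≤ Real.sqrt (c ^ (k - j) * ρ / η) :=
      opNorm2_le_sqrt (by positivity) Gᵀ hdiv
    rw [← opNorm2_transpose G]
    calc opNorm2 Gᵀ ≤ Real.sqrt (c ^ (k - j) * ρ / η) := hb1
      _ = Real.sqrt (ρ / η) * Real.sqrt (c ^ (k - j)) := by
          rw [← Real.sqrt_mul (by positivity)]
          congr 1
          field_simp
  -- trajectory formula
  set w : ℕ → EuclideanSpace ℝ (Fin n) := fun i => matVec (B i * K i) (v i) + d i with hwdef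
  have traj : ∀ k, k ≤ T → x k = matVec (tm Ac 0 k) (x 0)
      + ∑ i ∈ Finset.range k, matVec (tm Ac (i + 1) k) (w i) := by
    intro k
    induction k with
    | zero => intro _; simp [tm_self, matVec_one]
    | succ k ih =>
      intro hk
      have hkT : k ≤ T := Nat.le_of_succ_le hk
      have hkt : k < T := Nat.lt_of_succ_le hk
      have hxk := hx k hkt
      have hterm : ∀ i ∈ Finset.range k,
          matVec (Ac k) (matVec (tm Ac (i + 1) k) (w i))
            = matVec (tm Ac (i + 1) (k + 1)) (w i) := by
        intro i hi
        rw [tm_succ Ac (Nat.succ_le_of_lt (Finset.mem_range.mp hi)), matVec_mul]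
      have hhead : matVec (tm Ac 0 (k + 1)) (x 0) = matVec (Ac k) (matVec (tm Ac 0 k) (x 0)) := by
        rw [tm_succ Ac (Nat.zero_le k), matVec_mul]
      rw [hxk, ih hkT, matVec_add, matVec_sum, Finset.sum_congr rfl hterm,
        Finset.sum_range_succ, tm_self, matVec_one, hhead]
      simp only [hwdef, hAcdef]
      abel
  -- final assembly
  intro k hkT
  rw [traj k hkT]
  have hVb : BddAbove (Set.range fun j : Fin k => ‖v (j : ℕ)‖) :=
    Set.Finite.bddAbove (Set.finite_range _)
  have hDb : BddAbove (Set.range fun j : Fin k => ‖d (j : ℕ)‖) :=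
    Set.Finite.bddAbove (Set.finite_range _)
  set V : ℝ := ⨆ j : Fin k, ‖v (j : ℕ)‖ with hVdef
  set D : ℝ := ⨆ j : Fin k, ‖d (j : ℕ)‖ with hDdef
  have hwbound : ∀ i ∈ Finset.range k,
      ‖matVec (tm Ac (i + 1) k) (w i)‖ ≤
        (Real.sqrt (ρ / η) * Real.sqrt (c ^ (k - 1 - i)) * opNorm2 (K i)) * (b * V)
          + (Real.sqrt (ρ / η) * Real.sqrt (c ^ (k - 1 - i))) * D := by
    intro i hi
    have hik : i < k := Finset.mem_range.mp hi
    have hiT : i < T := lt_of_lt_of_le hik hkT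
    have hsub : k - (i + 1) = k - 1 - i := by omega
    have htm : opNorm2 (tm Ac (i + 1) k) ≤
        Real.sqrt (ρ / η) * Real.sqrt (c ^ (k - 1 - i)) := by
      have := hnorm (i + 1) k (Nat.succ_le_of_lt hik) hkT
      rwa [hsub] at this
    have hVi : ‖v i‖ ≤ V := le_ciSup hVb ⟨i, hik⟩
    have hDi : ‖d i‖ ≤ D := le_ciSup hDb ⟨i, hik⟩
    have hV0 : 0 ≤ V := le_trans (norm_nonneg _) hVi
    have hb0 : 0 ≤ b := le_trans (opNorm2_nonneg (B i)) (hb i hiT)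
    have hBK : opNorm2 (B i * K i) ≤ b * opNorm2 (K i) := by
      calc opNorm2 (B i * K i) ≤ opNorm2 (B i) * opNorm2 (K i) := opNorm2_mul_le _ _
        _ ≤ b * opNorm2 (K i) :=
            mul_le_mul_of_nonneg_right (hb i hiT) (opNorm2_nonneg _)
    have hw1 : ‖w i‖ ≤ b * opNorm2 (K i) * V + D := by
      rw [hwdef]
      calc ‖matVec (B i * K i) (v i) + d i‖
          ≤ ‖matVec (B i * K i) (v i)‖ + ‖d i‖ := norm_add_le _ _
        _ ≤ opNorm2 (B i * K i) * ‖v i‖ + ‖d i‖ := by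
            exact add_le_add_left (norm_matVec_le _ _) _
        _ ≤ b * opNorm2 (K i) * V + D := by
            refine add_le_add ?_ hDi
            calc opNorm2 (B i * K i) * ‖v i‖ ≤ (b * opNorm2 (K i)) * ‖v i‖ :=
                  mul_le_mul_of_nonneg_right hBK (norm_nonneg _)
              _ ≤ (b * opNorm2 (K i)) * V :=
                  mul_le_mul_of_nonneg_left hVi
                    (mul_nonneg hb0 (opNorm2_nonneg _))
    calc ‖matVec (tm Ac (i + 1) k) (w i)‖
        ≤ opNorm2 (tm Ac (i + 1) k) * ‖w i‖ := norm_matVec_le _ _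
      _ ≤ (Real.sqrt (ρ / η) * Real.sqrt (c ^ (k - 1 - i))) * (b * opNorm2 (K i) * V + D) := by
          refine mul_le_mul htm hw1 (norm_nonneg _) (by positivity)
      _ = (Real.sqrt (ρ / η) * Real.sqrt (c ^ (k - 1 - i)) * opNorm2 (K i)) * (b * V)
          + (Real.sqrt (ρ / η) * Real.sqrt (c ^ (k - 1 - i))) * D := by ring
  calc ‖matVec (tm Ac 0 k) (x 0) + ∑ i ∈ Finset.range k, matVec (tm Ac (i + 1) k) (w i)‖
      ≤ ‖matVec (tm Ac 0 k) (x 0)‖ + ∑ i ∈ Finset.range k, ‖matVec (tm Ac (i + 1) k) (w i)‖ :=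
        le_trans (norm_add_le _ _) (by
          exact add_le_add_right (norm_sum_le _ _) _)
    _ ≤ Real.sqrt (ρ / η) * Real.sqrt (c ^ k) * ‖x 0‖
        + ∑ i ∈ Finset.range k,
            ((Real.sqrt (ρ / η) * Real.sqrt (c ^ (k - 1 - i)) * opNorm2 (K i)) * (b * V)
              + (Real.sqrt (ρ / η) * Real.sqrt (c ^ (k - 1 - i))) * D) := by
        refine add_le_add ?_ (Finset.sum_le_sum hwbound)
        calc ‖matVec (tm Ac 0 k) (x 0)‖ ≤ opNorm2 (tm Ac 0 k) * ‖x 0‖ := norm_matVec_le _ _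
          _ ≤ Real.sqrt (ρ / η) * Real.sqrt (c ^ k) * ‖x 0‖ := by
              refine mul_le_mul_of_nonneg_right ?_ (norm_nonneg _)
              have := hnorm 0 k (Nat.zero_le k) hkT
              simpa using this
    _ = Real.sqrt (ρ / η) * Real.sqrt (c ^ k) * ‖x 0‖
        + b * (∑ j ∈ Finset.range k,
            Real.sqrt (ρ / η) * Real.sqrt (c ^ (k - 1 - j)) * opNorm2 (K j)) * V
        + (∑ j ∈ Finset.range k, Real.sqrt (ρ / η) * Real.sqrt (c ^ (k - 1 - j))) * D := by
        rw [Finset.sum_add_distrib, ← Finset.sum_mul, ← Finset.sum_mul]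
        ring
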